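/- For r ≥ 1, let V_r = ℚ^{1+r} equipped with the symmetric bilinear form B_r(x,y) = x₀y₀ − Σ_{i=1}^{r} x_i y_i, and let K_r = (−3,1,1,…,1) ∈ V_r, so that B_r(K_r,K_r) = 9 − r. Suppose that P(V_r, B_r, K_r, A₁, A₂) = 0 for every integer r > m + u₁ + u₂ and all tuples A₁ ∈ V_r^{u₁}, A₂ ∈ V_r^{u₂}. Then every polynomial p_{j,l,σ} is the zero polynomial; consequently P(V, B, K, A₁, A₂) = 0 for every ℚ-vector space V with symmetric bilinear form B, every vector K ∈ V, and all tuples A₁ ∈ V^{u₁}, A₂ ∈ V^{u₂}. -/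

import Mathlib

/-!
Each coefficient `p_{j,l,σ}` is isolated by evaluating on a blow-up lattice `ℚ^{1+r}` with
exceptional classes `e_t` and `L₀ = (1,0,…,0)`: put `a_{1,j t} = e_t − L₀/3`, which is orthogonal
to `K` and pairs only with `a_{2,l(σ t)} = e_t`, put `L₀` in the other slots of `A₁` and a further
exceptional class `e_s` in the other slots of `A₂`. A term `(j', l', σ')` survives only if all its
pairings are matched and it leaves no `a_{1,j t}` to be paired with `K`, which forces
`(j', l', σ') = (j, l, σ)`. The survivor is a nonzero constant times `p_{j,l,σ}(9 − r)`, so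
`p_{j,l,σ}` has infinitely many roots.
-/

open scoped Classical

/-- The universal polynomial expression `P(V, B, K, A₁, A₂)` of type `(u₁, u₂)` built
from a family of polynomials `p_{s,j,l,σ} ∈ ℚ[T]`:
`P = Σ_{s,j,l,σ} [∏_{i ∉ im j} B(K, a_{1,i})] · [∏_{i ∉ im l} B(K, a_{2,i})] ·
[∏_{i} B(a_{1,j i}, a_{2, l (σ i)})] · p_{j,l,σ}(B(K,K))`,
the sum running over `0 ≤ s ≤ min u₁ u₂`, strictly increasing tuples
`j : Fin s → Fin u₁`, `l : Fin s → Fin u₂`, and permutations `σ` of `Fin s`. -/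
noncomputable def univP {u₁ u₂ : ℕ}
    (p : (s : ℕ) → (Fin s → Fin u₁) → (Fin s → Fin u₂) → Equiv.Perm (Fin s) → Polynomial ℚ)
    {V : Type} (B : V → V → ℚ) (K : V)
    (A₁ : Fin u₁ → V) (A₂ : Fin u₂ → V) : ℚ :=
  ∑ s ∈ Finset.range (min u₁ u₂ + 1),
    ∑ j : Fin s → Fin u₁, ∑ l : Fin s → Fin u₂, ∑ σ : Equiv.Perm (Fin s),
      if StrictMono j ∧ StrictMono l then
        (∏ i ∈ Finset.univ.filter fun i => i ∉ Set.range j, B K (A₁ i)) *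
        (∏ i ∈ Finset.univ.filter fun i => i ∉ Set.range l, B K (A₂ i)) *
        (∏ i : Fin s, B (A₁ (j i)) (A₂ (l (σ i)))) *
        (p s j l σ).eval (B K K)
      else 0

open Finset Set

noncomputable def univTerm {u₁ u₂ : ℕ}
    (p : (s : ℕ) → (Fin s → Fin u₁) → (Fin s → Fin u₂) → Equiv.Perm (Fin s) → Polynomial ℚ)
    {V : Type} (B : V → V → ℚ) (K : V) (A₁ : Fin u₁ → V) (A₂ : Fin u₂ → V)
    (s : ℕ) (j : Fin s → Fin u₁) (l : Fin s → Fin u₂) (σ : Equiv.Perm (Fin s)) : ℚ :=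
  if StrictMono j ∧ StrictMono l then
    (∏ i ∈ Finset.univ.filter fun i => i ∉ Set.range j, B K (A₁ i)) *
    (∏ i ∈ Finset.univ.filter fun i => i ∉ Set.range l, B K (A₂ i)) *
    (∏ i : Fin s, B (A₁ (j i)) (A₂ (l (σ i)))) *
    (p s j l σ).eval (B K K)
  else 0

theorem univP_eq_sum_univTerm {u₁ u₂ : ℕ}
    (p : (s : ℕ) → (Fin s → Fin u₁) → (Fin s → Fin u₂) → Equiv.Perm (Fin s) → Polynomial ℚ)
    {V : Type} (B : V → V → ℚ) (K : V) (A₁ : Fin u₁ → V) (A₂ : Fin u₂ → V) :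
    univP p B K A₁ A₂ = ∑ s ∈ range (min u₁ u₂ + 1), ∑ j, ∑ l, ∑ σ,
      univTerm p B K A₁ A₂ s j l σ :=
  rfl

theorem univP_eq_zero {u₁ u₂ : ℕ}
    {p : (s : ℕ) → (Fin s → Fin u₁) → (Fin s → Fin u₂) → Equiv.Perm (Fin s) → Polynomial ℚ}
    (hp : ∀ s ≤ min u₁ u₂, ∀ (j : Fin s → Fin u₁) (l : Fin s → Fin u₂) (σ : Equiv.Perm (Fin s)),
      StrictMono j → StrictMono l → p s j l σ = 0)
    {V : Type} (B : V → V → ℚ) (K : V) (A₁ : Fin u₁ → V) (A₂ : Fin u₂ → V) :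
    univP p B K A₁ A₂ = 0 := by
  rw [univP_eq_sum_univTerm]
  refine sum_eq_zero fun s hs => sum_eq_zero fun j _ => sum_eq_zero fun l _ =>
    sum_eq_zero fun σ _ => ?_
  unfold univTerm
  split_ifs with h
  · rw [hp s (Nat.lt_succ_iff.mp (mem_range.mp hs)) j l σ h.1 h.2, Polynomial.eval_zero, mul_zero]
  · rfl

theorem StrictMono.fin_eq_of_range_eq {α : Type*} [Preorder α] {s s' : ℕ} {f : Fin s → α}
    {g : Fin s' → α} (hf : StrictMono f) (hg : StrictMono g) (h : range f = range g) :
    s = s' := by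
  have hcard := ncard_range_of_injective hf.injective
  rw [h, ncard_range_of_injective hg.injective] at hcard
  simpa using hcard.symm

structure IsolatesTerm {V : Type} (B : V → V → ℚ) (K : V) {u₁ u₂ s : ℕ}
    (A₁ : Fin u₁ → V) (A₂ : Fin u₂ → V)
    (j : Fin s → Fin u₁) (l : Fin s → Fin u₂) (σ : Equiv.Perm (Fin s)) : Prop where
  matched_of_pairing_ne_zero : ∀ x y, B (A₁ x) (A₂ y) ≠ 0 → ∃ t, j t = x ∧ l (σ t) = y
  pairing_matched_ne_zero : ∀ t, B (A₁ (j t)) (A₂ (l (σ t))) ≠ 0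
  canonical_matched : ∀ t, B K (A₁ (j t)) = 0
  canonical_unmatched₁ : ∀ x ∉ range j, B K (A₁ x) ≠ 0
  canonical_unmatched₂ : ∀ y ∉ range l, B K (A₂ y) ≠ 0

namespace IsolatesTerm

variable {V : Type} {B : V → V → ℚ} {K : V} {u₁ u₂ s : ℕ} {A₁ : Fin u₁ → V} {A₂ : Fin u₂ → V}
  {j : Fin s → Fin u₁} {l : Fin s → Fin u₂} {σ : Equiv.Perm (Fin s)}
  {p : (s : ℕ) → (Fin s → Fin u₁) → (Fin s → Fin u₂) → Equiv.Perm (Fin s) → Polynomial ℚ}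

theorem matching_of_univTerm_ne_zero (hA : IsolatesTerm B K A₁ A₂ j l σ) {s' : ℕ}
    {j' : Fin s' → Fin u₁} {l' : Fin s' → Fin u₂} {σ' : Equiv.Perm (Fin s')}
    (h : univTerm p B K A₁ A₂ s' j' l' σ' ≠ 0) :
    StrictMono j' ∧ StrictMono l' ∧ range j' = range j ∧
      ∀ i, ∃ t, j t = j' i ∧ l (σ t) = l' (σ' i) := by
  unfold univTerm at h
  split_ifs at h with hmono
  · simp only [ne_eq, mul_eq_zero, not_or, prod_eq_zero_iff, not_exists, not_and,
      mem_filter] at h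
    obtain ⟨⟨⟨hK₁, -⟩, hpair⟩, -⟩ := h
    have hmatch i := hA.matched_of_pairing_ne_zero _ _ (hpair i (mem_univ i))
    refine ⟨hmono.1, hmono.2, Subset.antisymm ?_ ?_, hmatch⟩
    · rintro _ ⟨i, rfl⟩
      obtain ⟨t, ht, -⟩ := hmatch i
      exact ⟨t, ht⟩
    · rintro _ ⟨t, rfl⟩
      by_contra ht
      exact hK₁ _ ⟨mem_univ _, ht⟩ (hA.canonical_matched t)
  · exact absurd rfl h

theorem eq_of_univTerm_ne_zero (hA : IsolatesTerm B K A₁ A₂ j l σ)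
    (hj : StrictMono j) (hl : StrictMono l)
    {j' : Fin s → Fin u₁} {l' : Fin s → Fin u₂} {σ' : Equiv.Perm (Fin s)}
    (h : univTerm p B K A₁ A₂ s j' l' σ' ≠ 0) : j' = j ∧ l' = l ∧ σ' = σ := by
  obtain ⟨hj', hl', hrange, hmatch⟩ := hA.matching_of_univTerm_ne_zero h
  have hjj : j' = j := (hj'.range_inj hj).mp hrange
  subst hjj
  have hll i : l' (σ' i) = l (σ i) := by
    obtain ⟨t, ht, hlt⟩ := hmatch i
    rw [hj'.injective ht] at hlt
    exact hlt.symm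
  have hll : l' = l := by
    refine (hl'.range_inj hl).mp ?_
    rw [← σ'.surjective.range_comp, ← σ.surjective.range_comp l]
    exact congrArg Set.range (funext hll)
  subst hll
  exact ⟨rfl, rfl, Equiv.ext fun i => hl'.injective (hll i)⟩

theorem univP_eq_univTerm (hA : IsolatesTerm B K A₁ A₂ j l σ) (hs : s ≤ min u₁ u₂)
    (hj : StrictMono j) (hl : StrictMono l) :
    univP p B K A₁ A₂ = univTerm p B K A₁ A₂ s j l σ := by
  rw [univP_eq_sum_univTerm, sum_eq_single_of_mem s (mem_range.mpr (Nat.lt_succ_of_le hs))]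
  · rw [Fintype.sum_eq_single j, Fintype.sum_eq_single l, Fintype.sum_eq_single σ]
    · exact fun σ' hσ' => by_contra fun h => hσ' (hA.eq_of_univTerm_ne_zero hj hl h).2.2
    · exact fun l' hl' => sum_eq_zero fun σ' _ => by_contra fun h =>
        hl' (hA.eq_of_univTerm_ne_zero hj hl h).2.1
    · exact fun j' hj' => sum_eq_zero fun l' _ => sum_eq_zero fun σ' _ => by_contra fun h =>
        hj' (hA.eq_of_univTerm_ne_zero hj hl h).1
  · intro s' _ hs'
    refine sum_eq_zero fun j' _ => sum_eq_zero fun l' _ => sum_eq_zero fun σ' _ => ?_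
    by_contra h
    obtain ⟨hj', -, hrange, -⟩ := hA.matching_of_univTerm_ne_zero h
    exact hs' (hj'.fin_eq_of_range_eq hj hrange)

theorem eval_eq_zero_of_univP_eq_zero (hA : IsolatesTerm B K A₁ A₂ j l σ)
    (hs : s ≤ min u₁ u₂) (hj : StrictMono j) (hl : StrictMono l)
    (h0 : univP p B K A₁ A₂ = 0) : (p s j l σ).eval (B K K) = 0 := by
  rw [hA.univP_eq_univTerm hs hj hl, univTerm, if_pos ⟨hj, hl⟩] at h0
  refine (mul_eq_zero.mp h0).resolve_left (mul_ne_zero (mul_ne_zero ?_ ?_) ?_)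
  · exact prod_ne_zero_iff.mpr fun x hx => hA.canonical_unmatched₁ x (mem_filter.mp hx).2
  · exact prod_ne_zero_iff.mpr fun y hy => hA.canonical_unmatched₂ y (mem_filter.mp hy).2
  · exact prod_ne_zero_iff.mpr fun t _ => hA.pairing_matched_ne_zero t

end IsolatesTerm

def blowupForm (r : ℕ) (x y : Fin (r + 1) → ℚ) : ℚ :=
  x 0 * y 0 - ∑ i : Fin r, x i.succ * y i.succ

def blowupCanonical (r : ℕ) : Fin (r + 1) → ℚ := fun i => if i = 0 then -3 else 1

section BlowupModel

variable {r : ℕ}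

theorem blowupForm_single_succ (x : Fin (r + 1) → ℚ) (k : Fin r) :
    blowupForm r x (Pi.single k.succ 1) = -x k.succ := by
  simp [blowupForm, Pi.single_apply, Fin.succ_ne_zero]

theorem blowupForm_canonical (y : Fin (r + 1) → ℚ) :
    blowupForm r (blowupCanonical r) y = -3 * y 0 - ∑ i : Fin r, y i.succ := by
  simp [blowupForm, blowupCanonical, Fin.succ_ne_zero]

theorem blowupForm_canonical_self :
    blowupForm r (blowupCanonical r) (blowupCanonical r) = 9 - r := by
  rw [blowupForm_canonical]
  simp [blowupCanonical, Fin.succ_ne_zero]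
  ring

variable {u₁ u₂ s : ℕ}

noncomputable def blowupTestTuple₁ (hsr : s ≤ r) (j : Fin s → Fin u₁) : Fin u₁ → Fin (r + 1) → ℚ :=
  Function.extend j (fun t => Pi.single (Fin.castLE hsr t).succ 1 - (3⁻¹ : ℚ) • Pi.single 0 1)
    fun _ => Pi.single 0 1

noncomputable def blowupTestIndex (hsr : s < r) (l : Fin s → Fin u₂) (σ : Equiv.Perm (Fin s)) :
    Fin u₂ → Fin r :=
  Function.extend (l ∘ σ) (Fin.castLE hsr.le) fun _ => ⟨s, hsr⟩

noncomputable def blowupTestTuple₂ (hsr : s < r) (l : Fin s → Fin u₂) (σ : Equiv.Perm (Fin s)) :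
    Fin u₂ → Fin (r + 1) → ℚ :=
  fun y => Pi.single (blowupTestIndex hsr l σ y).succ 1

theorem blowupTestTuple₁_apply_succ_ne_zero {hsr : s ≤ r} {j : Fin s → Fin u₁}
    (hj : Function.Injective j) {x : Fin u₁} {k : Fin r}
    (h : blowupTestTuple₁ hsr j x k.succ ≠ 0) : ∃ t, j t = x ∧ Fin.castLE hsr t = k := by
  by_cases hx : ∃ t, j t = x
  · obtain ⟨t, rfl⟩ := hx
    refine ⟨t, rfl, ?_⟩
    by_contra hne
    simp [blowupTestTuple₁, hj.extend_apply, Fin.succ_ne_zero, Ne.symm hne] at h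
  · simp [blowupTestTuple₁, Function.extend_apply' _ _ _ hx, Fin.succ_ne_zero] at h

theorem blowupTestIndex_apply (hsr : s < r) {l : Fin s → Fin u₂} (σ : Equiv.Perm (Fin s))
    (hl : Function.Injective l) (t : Fin s) :
    blowupTestIndex hsr l σ (l (σ t)) = Fin.castLE hsr.le t :=
  (hl.comp σ.injective).extend_apply _ _ t

theorem blowupTestIndex_eq_castLE {hsr : s < r} {l : Fin s → Fin u₂} {σ : Equiv.Perm (Fin s)}
    (hl : Function.Injective l) {y : Fin u₂} {t : Fin s}
    (h : blowupTestIndex hsr l σ y = Fin.castLE hsr.le t) : l (σ t) = y := by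
  by_cases hy : ∃ t', (l ∘ σ) t' = y
  · obtain ⟨t', rfl⟩ := hy
    rw [Function.comp_apply, blowupTestIndex_apply hsr σ hl, Fin.castLE_inj] at h
    rw [Function.comp_apply, h]
  · rw [blowupTestIndex, Function.extend_apply' _ _ _ hy] at h
    exact absurd (congrArg Fin.val h) (by simp [t.isLt.ne'])

theorem isolatesTerm_blowupTestTuple (hsr : s < r) {j : Fin s → Fin u₁} {l : Fin s → Fin u₂}
    (σ : Equiv.Perm (Fin s)) (hj : Function.Injective j) (hl : Function.Injective l) :
    IsolatesTerm (blowupForm r) (blowupCanonical r) (blowupTestTuple₁ hsr.le j)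
      (blowupTestTuple₂ hsr l σ) j l σ where
  matched_of_pairing_ne_zero x y h := by
    rw [blowupTestTuple₂, blowupForm_single_succ, neg_ne_zero] at h
    obtain ⟨t, rfl, ht⟩ := blowupTestTuple₁_apply_succ_ne_zero hj h
    exact ⟨t, rfl, blowupTestIndex_eq_castLE hl ht.symm⟩
  pairing_matched_ne_zero t := by
    simp [blowupTestTuple₁, blowupTestTuple₂, blowupTestIndex_apply hsr σ hl, hj.extend_apply,
      blowupForm_single_succ, Fin.succ_ne_zero]
  canonical_matched t := by
    rw [blowupTestTuple₁, hj.extend_apply, blowupForm_canonical]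
    simp [Pi.single_apply, Fin.succ_ne_zero]
  canonical_unmatched₁ x hx := by
    rw [blowupTestTuple₁, Function.extend_apply' _ _ _ hx, blowupForm_canonical]
    simp [Fin.succ_ne_zero]
  canonical_unmatched₂ y _ := by
    rw [blowupTestTuple₂, blowupForm_canonical]
    simp [Pi.single_apply, Fin.succ_ne_zero]

end BlowupModel

theorem vanishing_universal_polynomial_general {m u₁ u₂ : ℕ}
    (p : (s : ℕ) → (Fin s → Fin u₁) → (Fin s → Fin u₂) → Equiv.Perm (Fin s) → Polynomial ℚ)
    (hvan : ∀ r : ℕ, m + u₁ + u₂ < r →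
      ∀ (A₁ : Fin u₁ → (Fin (r + 1) → ℚ)) (A₂ : Fin u₂ → (Fin (r + 1) → ℚ)),
        univP p
          (fun x y => x 0 * y 0 - ∑ i : Fin r, x i.succ * y i.succ)
          (fun i => if i = 0 then (-3 : ℚ) else 1) A₁ A₂ = 0) :
    (∀ s : ℕ, s ≤ min u₁ u₂ → ∀ (j : Fin s → Fin u₁) (l : Fin s → Fin u₂)
      (σ : Equiv.Perm (Fin s)), StrictMono j → StrictMono l → p s j l σ = 0) ∧
    (∀ (V : Type) [AddCommGroup V] [Module ℚ V] (B : V → V → ℚ),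
      (∀ x y z : V, B (x + y) z = B x z + B y z) →
      (∀ x y z : V, B x (y + z) = B x y + B x z) →
      (∀ (c : ℚ) (x y : V), B (c • x) y = c * B x y) →
      (∀ (c : ℚ) (x y : V), B x (c • y) = c * B x y) →
      (∀ x y : V, B x y = B y x) →
      ∀ (K : V) (A₁ : Fin u₁ → V) (A₂ : Fin u₂ → V),
        univP p B K A₁ A₂ = 0) := by
  have hcoeff : ∀ s ≤ min u₁ u₂, ∀ (j : Fin s → Fin u₁) (l : Fin s → Fin u₂)
      (σ : Equiv.Perm (Fin s)), StrictMono j → StrictMono l → p s j l σ = 0 := by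
    intro s hs j l σ hj hl
    have hroot (r : ℕ) (hr : m + u₁ + u₂ < r) : (p s j l σ).IsRoot (9 - r) := by
      have hsr : s < r := by omega
      have hA := isolatesTerm_blowupTestTuple hsr σ hj.injective hl.injective
      have h := hA.eval_eq_zero_of_univP_eq_zero hs hj hl (hvan r hr _ _)
      rwa [blowupForm_canonical_self] at h
    refine Polynomial.eq_zero_of_infinite_isRoot _ <| Set.infinite_of_injective_forall_mem
      (f := fun k : ℕ => 9 - ((m + u₁ + u₂ + 1 + k : ℕ) : ℚ)) (fun a b hab => ?_)
      fun k => hroot _ (by omega)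
    simpa using hab
  exact ⟨hcoeff, fun V _ _ B _ _ _ _ _ K A₁ A₂ => univP_eq_zero hcoeff B K A₁ A₂⟩

/-- If the universal polynomial expression of degree at most `m` and type `(u₁, u₂)` vanishes
on the lattice models `(ℚ^{1+r}, B_r, K_r)` (coming from `r`-fold blow-ups of the plane,
with `B_r(x,y) = x₀y₀ − Σ_{i=1}^r x_i y_i` and `K_r = (−3,1,…,1)`) for every
`r > m + u₁ + u₂`, then every polynomial `p_{j,l,σ}` is the zero polynomial, and consequently
`P(V,B,K,A₁,A₂) = 0` for every ℚ-vector space `V` with a symmetric bilinear form `B`,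
every `K ∈ V` and all tuples `A₁ ∈ V^{u₁}`, `A₂ ∈ V^{u₂}`. -/
theorem vanishing_universal_polynomial {m u₁ u₂ : ℕ}
    (p : (s : ℕ) → (Fin s → Fin u₁) → (Fin s → Fin u₂) → Equiv.Perm (Fin s) → Polynomial ℚ)
    (hdeg : ∀ (s : ℕ) (j : Fin s → Fin u₁) (l : Fin s → Fin u₂) (σ : Equiv.Perm (Fin s)),
      (p s j l σ).natDegree ≤ m)
    (hvan : ∀ r : ℕ, m + u₁ + u₂ < r →
      ∀ (A₁ : Fin u₁ → (Fin (r + 1) → ℚ)) (A₂ : Fin u₂ → (Fin (r + 1) → ℚ)),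
        univP p
          (fun x y => x 0 * y 0 - ∑ i : Fin r, x i.succ * y i.succ)
          (fun i => if i = 0 then (-3 : ℚ) else 1) A₁ A₂ = 0) :
    (∀ s : ℕ, s ≤ min u₁ u₂ → ∀ (j : Fin s → Fin u₁) (l : Fin s → Fin u₂)
      (σ : Equiv.Perm (Fin s)), StrictMono j → StrictMono l → p s j l σ = 0) ∧
    (∀ (V : Type) [AddCommGroup V] [Module ℚ V] (B : V → V → ℚ),
      (∀ x y z : V, B (x + y) z = B x z + B y z) →
      (∀ x y z : V, B x (y + z) = B x y + B x z) →
      (∀ (c : ℚ) (x y : V), B (c • x) y = c * B x y) →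
      (∀ (c : ℚ) (x y : V), B x (c • y) = c * B x y) →
      (∀ x y : V, B x y = B y x) →
      ∀ (K : V) (A₁ : Fin u₁ → V) (A₂ : Fin u₂ → V),
        univP p B K A₁ A₂ = 0) :=
  vanishing_universal_polynomial_general p hvan
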